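/- arXiv:2310.15146 — 3 statements merged into one kernel-verified Lean document; each statement's English description precedes it below -/
import Mathlib

section
/- Let (p_d(t)), (p_c(t)), (p_n(t)) be real sequences indexed by positive integers with p_d(t), p_c(t), p_n(t) ≥ 0 and p_d(t)+p_c(t)+p_n(t)=1 for all t, with p_d and p_c nondecreasing and p_n nonincreasing. Fix penalties d, c ≥ 0 and define the family of values W(t,j) by W(t,0)=1 and W(t,j+1) = 1 - d·p_d(t+1) - c·p_c(t+1) + p_n(t+1)·W(t+1,j). Then for every t and j, if W(t,j) ≥ W(t,j+1) then W(t+1,j) ≥ W(t+1,j+1). -/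
/-! Write `Δ t j = W t j - W t (j + 1)`. Then `Δ t 0 = d pd(t+1) + c pc(t+1) - pn(t+1)` is
nondecreasing in `t`, and `Δ t (j + 1) = pn(t+1) · Δ (t+1) j`, so nonnegativity of `Δ` moves from
`t` to `t + 1` by induction on `j`: for `j = 0` by monotonicity, and in the inductive step by
dividing out `pn(t+1)` (if it vanishes then so does `pn(t+2)`, since `pn` is antitone). -/

theorem nonneg_succ_of_nonneg_of_eq_mul {q : ℕ → ℝ} {Δ : ℕ → ℕ → ℝ}
    (hq : ∀ t, 0 ≤ q t) (hq_anti : Antitone q) (hΔ_zero : Monotone fun t => Δ t 0)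
    (hΔ_succ : ∀ t j, Δ t (j + 1) = q (t + 1) * Δ (t + 1) j) :
    ∀ j t, 0 ≤ Δ t j → 0 ≤ Δ (t + 1) j := by
  intro j
  induction j with
  | zero => exact fun t h => h.trans (hΔ_zero t.le_succ)
  | succ j ih =>
    intro t h
    rw [hΔ_succ] at h ⊢
    rcases (hq (t + 1)).eq_or_lt with hq_zero | hq_pos
    · have : q (t + 2) = 0 := le_antisymm (hq_zero ▸ hq_anti (t + 1).le_succ) (hq _)
      simp [this]
    · exact mul_nonneg (hq _) (ih _ (nonneg_of_mul_nonneg_right h hq_pos))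

theorem stmt_0_general
    (pd pc pn : ℕ → ℝ)
    (hpn : ∀ t, 0 ≤ pn t)
    (hpd_mono : Monotone pd) (hpc_mono : Monotone pc) (hpn_anti : Antitone pn)
    (d c : ℝ) (hd : 0 ≤ d) (hc : 0 ≤ c)
    (W : ℕ → ℕ → ℝ)
    (hW0 : ∀ t, W t 0 = 1)
    (hWs : ∀ t j, W t (j + 1) = 1 - d * pd (t + 1) - c * pc (t + 1) + pn (t + 1) * W (t + 1) j) :
    ∀ t j, W t j ≥ W t (j + 1) → W (t + 1) j ≥ W (t + 1) (j + 1) := by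
  have hgap_zero : Monotone fun t => W t 0 - W t (0 + 1) := by
    intro a b hab
    have hab' : a + 1 ≤ b + 1 := Nat.succ_le_succ hab
    have hpd_le := mul_le_mul_of_nonneg_left (hpd_mono hab') hd
    have hpc_le := mul_le_mul_of_nonneg_left (hpc_mono hab') hc
    have hpn_le := hpn_anti hab'
    simp only [hWs, hW0]
    linarith
  have hgap_succ : ∀ t j, W t (j + 1) - W t (j + 1 + 1)
      = pn (t + 1) * (W (t + 1) j - W (t + 1) (j + 1)) := by
    intro t j
    rw [hWs t j, hWs t (j + 1)]
    ring
  intro t j h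
  exact sub_nonneg.1 <| nonneg_succ_of_nonneg_of_eq_mul (Δ := fun t j => W t j - W t (j + 1))
    hpn hpn_anti hgap_zero hgap_succ j t (sub_nonneg.2 h)

theorem stmt_0
    (pd pc pn : ℕ → ℝ)
    (hpd : ∀ t, 0 ≤ pd t) (hpc : ∀ t, 0 ≤ pc t) (hpn : ∀ t, 0 ≤ pn t)
    (hsum : ∀ t, pd t + pc t + pn t = 1)
    (hpd_mono : Monotone pd) (hpc_mono : Monotone pc) (hpn_anti : Antitone pn)
    (d c : ℝ) (hd : 0 ≤ d) (hc : 0 ≤ c)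
    (W : ℕ → ℕ → ℝ)
    (hW0 : ∀ t, W t 0 = 1)
    (hWs : ∀ t j, W t (j + 1) = 1 - d * pd (t + 1) - c * pc (t + 1) + pn (t + 1) * W (t + 1) j) :
    ∀ t j, W t j ≥ W t (j + 1) → W (t + 1) j ≥ W (t + 1) (j + 1) :=
  stmt_0_general pd pc pn hpn hpd_mono hpc_mono hpn_anti d c hd hc W hW0 hWs
end

section
/- Let (p_d(t)), (p_c(t)), (p_n(t)) be nonnegative sequences summing to 1 for each t, with p_d, p_c nondecreasing and p_n nonincreasing. Fix d, c ≥ 0 and define W(t,0)=1 and W(t,j+1) = 1 - d·p_d(t+1) - c·p_c(t+1) + p_n(t+1)·W(t+1,j). If for some t we have W(t,0) ≥ W(t,1), then W(t,j) ≥ W(t,j+1) for every j ≥ 1. -/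
theorem stmt_2
    (pd pc pn : ℕ → ℝ)
    (hpd : ∀ t, 0 ≤ pd t) (hpc : ∀ t, 0 ≤ pc t) (hpn : ∀ t, 0 ≤ pn t)
    (hsum : ∀ t, pd t + pc t + pn t = 1)
    (hpd_mono : Monotone pd) (hpc_mono : Monotone pc) (hpn_anti : Antitone pn)
    (d c : ℝ) (hd : 0 ≤ d) (hc : 0 ≤ c)
    (W : ℕ → ℕ → ℝ)
    (hW0 : ∀ t, W t 0 = 1)
    (hWs : ∀ t j, W t (j + 1) = 1 - d * pd (t + 1) - c * pc (t + 1) + pn (t + 1) * W (t + 1) j) :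
    ∀ t, W t 0 ≥ W t 1 → ∀ j, 1 ≤ j → W t j ≥ W t (j + 1) := by
  intro t ht j hj
  have key : ∀ s, t ≤ s → W s 0 ≥ W s 1 := by
    intro s hs
    rw [hW0, hWs, hW0]
    have h1 : W t 0 ≥ W t 1 := ht
    rw [hW0, hWs, hW0] at h1
    have h2 : pn (s+1) ≤ pn (t+1) := hpn_anti (by omega)
    have h3 : d * pd (t+1) ≤ d * pd (s+1) := mul_le_mul_of_nonneg_left (hpd_mono (by omega)) hd
    have h4 : c * pc (t+1) ≤ c * pc (s+1) := mul_le_mul_of_nonneg_left (hpc_mono (by omega)) hc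
    linarith
  have main : ∀ j s, t ≤ s → W s j ≥ W s (j+1) := by
    intro j
    induction j with
    | zero => intro s hs; exact key s hs
    | succ k ih =>
      intro s hs
      rw [hWs, hWs]
      have h1 := ih (s+1) (by omega)
      have h2 := hpn (s+1)
      nlinarith
  exact main j t le_rfl
end

section
/- Let (p_d(t)), (p_c(t)), (p_n(t)) be nonnegative sequences summing to 1 for each t, with p_d, p_c nondecreasing and p_n nonincreasing. Fix d, c ≥ 0 and define W(t,0)=1 and W(t,j+1) = 1 - d·p_d(t+1) - c·p_c(t+1) + p_n(t+1)·W(t+1,j). If for some t we have W(t,0) ≥ W(t,1), then W(t,1) ≥ W(t,j) for every j ≥ 2. -/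
theorem stmt_3
    (pd pc pn : ℕ → ℝ)
    (hpd : ∀ t, 0 ≤ pd t) (hpc : ∀ t, 0 ≤ pc t) (hpn : ∀ t, 0 ≤ pn t)
    (hsum : ∀ t, pd t + pc t + pn t = 1)
    (hpd_mono : Monotone pd) (hpc_mono : Monotone pc) (hpn_anti : Antitone pn)
    (d c : ℝ) (hd : 0 ≤ d) (hc : 0 ≤ c)
    (W : ℕ → ℕ → ℝ)
    (hW0 : ∀ t, W t 0 = 1)
    (hWs : ∀ t j, W t (j + 1) = 1 - d * pd (t + 1) - c * pc (t + 1) + pn (t + 1) * W (t + 1) j) :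
    ∀ t, W t 0 ≥ W t 1 → ∀ j, 2 ≤ j → W t 1 ≥ W t j := by
  intro t ht j hj
  have h1 := hWs t 0
  rw [hW0 (t+1)] at h1
  have key : pn (t+1) ≤ d * pd (t+1) + c * pc (t+1) := by
    rw [h1, hW0 t] at ht
    linarith
  have hle1 : ∀ j s, t ≤ s → W s j ≤ 1 := by
    intro j
    induction j with
    | zero => intro s _; rw [hW0]
    | succ k ih =>
      intro s hs
      rw [hWs]
      have h2 : pd (t+1) ≤ pd (s+1) := hpd_mono (by omega)
      have h3 : pc (t+1) ≤ pc (s+1) := hpc_mono (by omega)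
      have h4 : pn (s+1) ≤ pn (t+1) := hpn_anti (by omega)
      have hkey : pn (s+1) ≤ d * pd (s+1) + c * pc (s+1) := by
        nlinarith [mul_le_mul_of_nonneg_left h2 hd, mul_le_mul_of_nonneg_left h3 hc]
      have hw := ih (s+1) (by omega)
      nlinarith [hpn (s+1)]
  obtain ⟨k, rfl⟩ : ∃ k, j = k + 1 := ⟨j-1, by omega⟩
  rw [hWs t k, h1]
  have := hle1 k (t+1) (by omega)
  nlinarith [hpn (t+1)]
end
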